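/- Let R̄(u) = f(u/h) R(u) be the normalized rational R-matrix. Then R̄(u) · R̄(u + hκ)' = 1 and R̄(u + hκ)' · R̄(u) = 1 (crossing symmetry), where ' denotes the form-transpose applied to one tensor factor. -/

import Mathlib

/-!
In `ℂ[[u⁻¹]]` we have `R(u) = 1 - hP/u + hQ/(u - hκ)`. The shift `u ↦ u + c` is the substitution
`u⁻¹ ↦ u⁻¹/(1 + c u⁻¹)`, hence a ring homomorphism, and the partial transpose exchanges `P` and `Q`,
so `R(u + hκ)' = 1 - hQ/(u + hκ) + hP/u`. Since `P² = 1`, `Q² = NQ` and `PQ = QP = θQ`, where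
`ε_{i'} = θ ε_i`, both products `R(u) R(u + hκ)'` and `R(u + hκ)' R(u)` equal `(1 - h²/u²)` times
the identity plus a multiple of `Q` whose coefficient vanishes because `2κ = N - 2θ`. The
normalization `f(u/h) f(u/h + κ) = (1 - h²/u²)⁻¹` cancels the scalar.
-/

open Matrix PowerSeries

/-- The permutation operator `P = ∑_{i,j} e_{ij} ⊗ e_{ji}`. -/
noncomputable def Pm (N : ℕ) : Matrix (Fin N × Fin N) (Fin N × Fin N) ℂ :=
  ∑ i : Fin N, ∑ j : Fin N,
    Matrix.kroneckerMap (· * ·) (Matrix.single i j (1 : ℂ))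
      (Matrix.single j i (1 : ℂ))

/-- `Q = ∑_{i,j} ε_i ε_j e_{ij} ⊗ e_{i'j'}`, with `i' = N - i + 1` realized as `Fin.rev`. -/
noncomputable def Qm (N : ℕ) (ε : Fin N → ℂ) : Matrix (Fin N × Fin N) (Fin N × Fin N) ℂ :=
  ∑ i : Fin N, ∑ j : Fin N,
    (ε i * ε j) • Matrix.kroneckerMap (· * ·) (Matrix.single i j (1 : ℂ))
      (Matrix.single i.rev j.rev (1 : ℂ))

/-- Orthogonal case data: all `ε_i = 1` and `κ = N/2 - 1`. -/
def orthCase (N : ℕ) (ε : Fin N → ℂ) (κ : ℂ) : Prop :=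
  (∀ i, ε i = 1) ∧ κ = (N : ℂ) / 2 - 1

/-- Symplectic case data: `N` even, `ε_i = ±1` by halves, and `κ = N/2 + 1`. -/
def spCase (N : ℕ) (ε : Fin N → ℂ) (κ : ℂ) : Prop :=
  N % 2 = 0 ∧ (∀ i : Fin N, ε i = if (i : ℕ) < N / 2 then 1 else -1) ∧ κ = (N : ℂ) / 2 + 1

/-- For a series in `u⁻¹` (encoded as a power series in `X = u⁻¹`), the substitution
`u ↦ u + c`, via `(u+c)^{-s} = ∑_{k≥0} (-1)^k C(s+k-1,k) c^k u^{-s-k}`. -/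
noncomputable def shiftC (c : ℂ) (F : PowerSeries ℂ) : PowerSeries ℂ :=
  PowerSeries.mk fun r => ∑ s ∈ Finset.range (r + 1),
    ((-1 : ℂ)) ^ (r - s) * (Nat.choose (r - 1) (r - s) : ℂ) * c ^ (r - s) *
      PowerSeries.coeff s F

/-- The substitution `u ↦ -u` on series in `u⁻¹`. -/
noncomputable def negArg (F : PowerSeries ℂ) : PowerSeries ℂ :=
  PowerSeries.mk fun r => (-1 : ℂ) ^ r * PowerSeries.coeff r F

/-- The series `(1 - u⁻²)⁻¹ = ∑_{r≥0} u^{-2r}`. -/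
noncomputable def geomEven : PowerSeries ℂ :=
  PowerSeries.mk fun r => if Even r then (1 : ℂ) else 0

/-- The defining property of the normalizing series `f`. -/
def isNormSeries (κ : ℂ) (f : PowerSeries ℂ) : Prop :=
  PowerSeries.coeff 0 f = 1 ∧ PowerSeries.coeff 1 f = 0 ∧ f * shiftC κ f = geomEven

/-- The series `f(u/h) = 1 + ∑_{r≥1} f_r h^r u^{-r}` in `ℂ[[u⁻¹]]`. -/
noncomputable def fScaled (h : ℂ) (f : PowerSeries ℂ) : PowerSeries ℂ :=
  PowerSeries.mk fun r => h ^ r * PowerSeries.coeff r f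

/-- The expansion of `h/u` as a series in `u⁻¹`. -/
noncomputable def pSer (h : ℂ) : PowerSeries ℂ :=
  PowerSeries.mk fun r => if r = 1 then h else 0

/-- The expansion of `h/(u - hκ) = ∑_{k≥0} h^{k+1} κ^k u^{-k-1}` as a series in `u⁻¹`. -/
noncomputable def qSer (h κ : ℂ) : PowerSeries ℂ :=
  PowerSeries.mk fun r => if r = 0 then 0 else h ^ r * κ ^ (r - 1)

/-- A complex matrix viewed as a matrix of (constant) power series. -/
noncomputable def toPS {ι : Type*} (M : Matrix ι ι ℂ) : Matrix ι ι (PowerSeries ℂ) :=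
  M.map (PowerSeries.C)

/-- The normalized R-matrix `R̄(u) = f(u/h) R(u)` with `R(u) = 1 - hP/u + hQ/(u-hκ)`,
as a matrix over `ℂ[[u⁻¹]]`. -/
noncomputable def RbarMat (N : ℕ) (ε : Fin N → ℂ) (κ h : ℂ) (f : PowerSeries ℂ) :
    Matrix (Fin N × Fin N) (Fin N × Fin N) (PowerSeries ℂ) :=
  fScaled h f • ((1 : Matrix (Fin N × Fin N) (Fin N × Fin N) (PowerSeries ℂ))
    - pSer h • toPS (Pm N) + qSer h κ • toPS (Qm N ε))

/-- `u ↦ -u` applied entrywise. -/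
noncomputable def negMat {ι : Type*} (M : Matrix ι ι (PowerSeries ℂ)) :
    Matrix ι ι (PowerSeries ℂ) := M.map negArg

/-- `u ↦ u + c` applied entrywise. -/
noncomputable def shiftMat {ι : Type*} (c : ℂ) (M : Matrix ι ι (PowerSeries ℂ)) :
    Matrix ι ι (PowerSeries ℂ) := M.map (shiftC c)

/-- The partial form-transpose applied to the first tensor factor. -/
noncomputable def ptrans1PS (N : ℕ) (ε : Fin N → ℂ)
    (A : Matrix (Fin N × Fin N) (Fin N × Fin N) (PowerSeries ℂ)) :
    Matrix (Fin N × Fin N) (Fin N × Fin N) (PowerSeries ℂ) :=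
  Matrix.of fun p q => PowerSeries.C (ε p.1 * ε q.1) * A (q.1.rev, p.2) (p.1.rev, q.2)

-- `ε_{i'} = θ ε_i` with `ε_i = ±1`: the form `∑ ε_i e_{i i'}` is symmetric for `θ = 1` and
-- skew-symmetric for `θ = -1`.
structure IsFormSign {N : ℕ} (θ : ℂ) (ε : Fin N → ℂ) : Prop where
  mul_self : ∀ i, ε i * ε i = 1
  rev : ∀ i, ε i.rev = θ * ε i

lemma IsFormSign.mul_mul_rev_mul_rev {N : ℕ} {θ : ℂ} {ε : Fin N → ℂ} (hε : IsFormSign θ ε)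
    (a c : Fin N) : ε a * ε c * (ε c.rev * ε a.rev) = 1 := by
  have hθ := hε.mul_self a.rev
  rw [hε.rev] at hθ
  rw [hε.rev, hε.rev]
  linear_combination θ * θ * ε a * ε a * hε.mul_self c + hθ

lemma orthCase.isFormSign {N : ℕ} {ε : Fin N → ℂ} {κ : ℂ} (h : orthCase N ε κ) :
    IsFormSign 1 ε where
  mul_self i := by simp [h.1 i]
  rev i := by simp [h.1]

lemma spCase.isFormSign {N : ℕ} {ε : Fin N → ℂ} {κ : ℂ} (h : spCase N ε κ) :
    IsFormSign (-1) ε where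
  mul_self i := by rw [h.2.1 i]; split <;> norm_num
  rev i := by
    have hrev : ((i.rev : Fin N) : ℕ) = N - (i + 1) := rfl
    have hN : N % 2 = 0 := h.1
    rw [h.2.1, h.2.1, hrev]
    by_cases hi : (i : ℕ) < N / 2
    · rw [if_pos hi, if_neg (by omega)]; norm_num
    · rw [if_neg hi, if_pos (by omega)]; norm_num

section PQ

variable {N : ℕ} {ε : Fin N → ℂ} {θ : ℂ}

lemma Pm_apply (a b c d : Fin N) :
    Pm N (a, b) (c, d) = if a = d ∧ b = c then 1 else 0 := by
  simp [Pm, Matrix.sum_apply, Matrix.single, ite_and, Finset.sum_ite_eq, eq_comm]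

lemma Qm_apply (a b c d : Fin N) :
    Qm N ε (a, b) (c, d) = if b = a.rev ∧ d = c.rev then ε a * ε c else 0 := by
  simp only [Qm, Matrix.sum_apply, Matrix.smul_apply, Matrix.kroneckerMap_apply,
    Matrix.single, Matrix.of_apply, Fin.rev_eq_iff, ite_and, smul_eq_mul]
  simp [eq_comm]
  aesop

lemma Pm_mul_Pm : Pm N * Pm N = 1 := by
  ext ⟨a, b⟩ ⟨c, d⟩
  simp only [Matrix.mul_apply, Fintype.sum_prod_type, Pm_apply, Matrix.one_apply, ite_and]
  simp [Finset.sum_ite_eq, eq_comm, Prod.ext_iff, ite_and]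

lemma Qm_mul_Qm (hε : IsFormSign θ ε) : Qm N ε * Qm N ε = (N : ℂ) • Qm N ε := by
  ext ⟨a, b⟩ ⟨c, d⟩
  rw [Matrix.mul_apply, Fintype.sum_prod_type]
  simp only [Qm_apply, Matrix.smul_apply, smul_eq_mul, ite_and, mul_ite, ite_mul, zero_mul,
    mul_zero]
  by_cases h1 : b = a.rev <;> by_cases h2 : d = c.rev <;> simp [h1, h2]
  have hx : ∀ x : Fin N, ε a * ε x * (ε x * ε c) = ε a * ε c := fun x => by
    linear_combination ε a * ε c * hε.mul_self x
  simp [hx, Finset.card_univ]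

lemma Pm_mul_Qm (hε : IsFormSign θ ε) : Pm N * Qm N ε = θ • Qm N ε := by
  ext ⟨a, b⟩ ⟨c, d⟩
  rw [Matrix.mul_apply, Fintype.sum_prod_type]
  simp only [Pm_apply, Qm_apply, Matrix.smul_apply, smul_eq_mul, ite_and, mul_ite, ite_mul,
    zero_mul, mul_zero, one_mul]
  have hrev : ∀ x : Fin N, (a = x.rev) = (x = a.rev) := fun x => propext
    ⟨fun h => by rw [h, Fin.rev_rev], fun h => by rw [h, Fin.rev_rev]⟩
  by_cases h1 : b = a.rev <;> by_cases h2 : d = c.rev <;> simp [h1, h2, hrev, hε.rev a]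
  ring

lemma Qm_mul_Pm (hε : IsFormSign θ ε) : Qm N ε * Pm N = θ • Qm N ε := by
  ext ⟨a, b⟩ ⟨c, d⟩
  rw [Matrix.mul_apply, Fintype.sum_prod_type]
  simp only [Pm_apply, Qm_apply, Matrix.smul_apply, smul_eq_mul, ite_and, mul_ite, mul_zero,
    mul_one]
  by_cases h1 : b = a.rev <;> by_cases h2 : d = c.rev <;> simp [h1, h2]
  · rw [hε.rev c]; ring
  · exact fun hc => absurd (by rw [hc, Fin.rev_rev]) h2

end PQ

namespace Matrix

variable {R ι : Type*} [CommRing R] [Fintype ι] [DecidableEq ι] {P Q : Matrix ι ι R}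
  {n θ p q q' : R}

theorem crossing_pair_mul_eq_smul_one (hPP : P * P = 1) (hQQ : Q * Q = n • Q)
    (hPQ : P * Q = θ • Q) (hQP : Q * P = θ • Q)
    (hkey : q - q' + θ * p * q' + θ * p * q - n * q * q' = 0) :
    (1 - p • P + q • Q) * (1 - q' • Q + p • P) = (1 - p * p) • 1 ∧
      (1 - q' • Q + p • P) * (1 - p • P + q • Q) = (1 - p * p) • 1 := by
  simp only [Matrix.mul_add, Matrix.add_mul, Matrix.mul_sub, Matrix.sub_mul, Matrix.smul_mul,
    Matrix.mul_smul, Matrix.mul_one, Matrix.one_mul, hPP, hPQ, hQP, hQQ]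
  constructor <;> linear_combination (norm := module) hkey • Q

end Matrix

-- The expansion of `1/(u + c) = X/(1 + cX)` in `X = u⁻¹`; `shiftC c` substitutes it for `X`.
noncomputable def shiftSubst (c : ℂ) : PowerSeries ℂ := X * rescale (-c) (mk 1)

lemma shiftSubst_mul_one_add (c : ℂ) : shiftSubst c * (1 + C c * X) = X := by
  have h : rescale (-c) (mk 1 : PowerSeries ℂ) * rescale (-c) (1 - X) = 1 := by
    rw [← map_mul, mk_one_mul_one_sub_eq_one, map_one]
  rw [map_sub, map_one, rescale_X, map_neg, neg_mul, sub_neg_eq_add] at h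
  rw [shiftSubst, mul_assoc, h, mul_one]

lemma hasSubst_shiftSubst (c : ℂ) : HasSubst (shiftSubst c) :=
  HasSubst.of_constantCoeff_zero' (by simp [shiftSubst])

lemma coeff_shiftSubst_pow (c : ℂ) {r s : ℕ} (hs : s ≤ r) :
    coeff r (shiftSubst c ^ s) = (-1) ^ (r - s) * (r - 1).choose (r - s) * c ^ (r - s) := by
  obtain ⟨k, rfl⟩ := Nat.exists_eq_add_of_le hs
  rw [shiftSubst, mul_pow, ← map_pow, coeff_X_pow_mul', if_pos hs, coeff_rescale,
    Nat.add_sub_cancel_left, neg_pow]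
  rcases s with _ | d
  · rcases k with _ | k <;> simp
  · rw [mk_one_pow_eq_mk_choose_add, coeff_mk, show d + 1 + k - 1 = d + k by omega,
      Nat.choose_symm_add]
    ring

lemma coeff_shiftSubst_pow_of_lt (c : ℂ) {r s : ℕ} (hs : r < s) :
    coeff r (shiftSubst c ^ s) = 0 := by
  rw [shiftSubst, mul_pow, coeff_X_pow_mul', if_neg (by omega)]

lemma shiftC_eq_subst (c : ℂ) (F : PowerSeries ℂ) : shiftC c F = F.subst (shiftSubst c) := by
  ext r
  rw [coeff_subst' (hasSubst_shiftSubst c),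
    finsum_eq_sum_of_support_subset (s := Finset.range (r + 1))]
  · simp only [shiftC, coeff_mk, smul_eq_mul]
    refine Finset.sum_congr rfl fun s hs => ?_
    rw [coeff_shiftSubst_pow c (Finset.mem_range_succ_iff.1 hs)]
    ring
  · intro s hs
    by_contra hr
    simp only [Finset.coe_range, Set.mem_Iio, not_lt] at hr
    exact hs (by simp [coeff_shiftSubst_pow_of_lt c (by omega : r < s)])

noncomputable def shiftAlgHom (c : ℂ) : PowerSeries ℂ →ₐ[ℂ] PowerSeries ℂ :=
  substAlgHom (hasSubst_shiftSubst c)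

lemma shiftAlgHom_apply (c : ℂ) (F : PowerSeries ℂ) : shiftAlgHom c F = shiftC c F := by
  rw [shiftC_eq_subst, shiftAlgHom, coe_substAlgHom]

lemma shiftAlgHom_X (c : ℂ) : shiftAlgHom c X = shiftSubst c := by
  rw [shiftAlgHom, substAlgHom_X]

lemma shiftAlgHom_C (c a : ℂ) : shiftAlgHom c (C a) = C a := by
  rw [C_eq_algebraMap, AlgHom.commutes]

lemma isUnit_one_add_C_mul_X (c : ℂ) : IsUnit (1 + C c * X : PowerSeries ℂ) := by
  rw [isUnit_iff_constantCoeff]; simp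

lemma pSer_eq (h : ℂ) : pSer h = C h * X := by
  ext r
  simp [pSer, coeff_C_mul, coeff_X]

lemma qSer_mul_one_sub (h κ : ℂ) : qSer h κ * (1 - C (h * κ) * X) = C h * X := by
  ext r
  rcases r with _ | r
  · simp [qSer]
  · rw [mul_sub, mul_one, map_sub, mul_left_comm, coeff_C_mul, coeff_C_mul, coeff_succ_mul_X,
      coeff_X]
    rcases r with _ | r
    · simp [qSer]
    · simp [qSer]
      ring

lemma qSer_neg_mul_one_add (h κ : ℂ) : qSer h (-κ) * (1 + C (h * κ) * X) = C h * X := by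
  simpa only [mul_neg, map_neg, neg_mul, sub_neg_eq_add] using qSer_mul_one_sub h (-κ)

lemma shiftAlgHom_pSer (h κ : ℂ) : shiftAlgHom (h * κ) (pSer h) = qSer h (-κ) := by
  rw [← (isUnit_one_add_C_mul_X (h * κ)).mul_left_inj, qSer_neg_mul_one_add, pSer_eq,
    map_mul, shiftAlgHom_C, shiftAlgHom_X, mul_assoc, shiftSubst_mul_one_add]

lemma shiftAlgHom_qSer (h κ : ℂ) : shiftAlgHom (h * κ) (qSer h κ) = pSer h := by
  have hq := congrArg (shiftAlgHom (h * κ)) (qSer_mul_one_sub h κ)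
  have hX := shiftSubst_mul_one_add (h * κ)
  simp only [map_mul, map_sub, map_one, shiftAlgHom_C, shiftAlgHom_X] at hq hX
  rw [pSer_eq]
  linear_combination (1 + C h * C κ * X) * hq +
    (shiftAlgHom (h * κ) (qSer h κ) * C h * C κ + C h) * hX

lemma shiftAlgHom_rescale (h κ : ℂ) (f : PowerSeries ℂ) :
    shiftAlgHom (h * κ) (rescale h f) = rescale h (shiftAlgHom κ f) := by
  ext r
  rw [shiftAlgHom_apply, shiftAlgHom_apply]
  simp only [shiftC, coeff_mk, coeff_rescale, Finset.mul_sum]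
  refine Finset.sum_congr rfl fun s hs => ?_
  rw [mul_pow, ← Nat.sub_add_cancel (Finset.mem_range_succ_iff.1 hs), pow_add h,
    Nat.add_sub_cancel]
  ring

lemma one_sub_X_sq_mul_geomEven : (1 - X ^ 2 : PowerSeries ℂ) * geomEven = 1 := by
  let φ := substAlgHom (R := ℂ) (HasSubst.X_pow (R := ℂ) two_ne_zero)
  have hgeom : φ (mk 1) = geomEven := by
    ext n
    simp [φ, coe_substAlgHom, geomEven, even_iff_two_dvd]
  have hφ : φ (1 - X) = 1 - X ^ 2 := by rw [map_sub, map_one, substAlgHom_X]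
  rw [← hgeom, ← hφ, ← map_mul, mul_comm, mk_one_mul_one_sub_eq_one, map_one]

lemma fScaled_eq_rescale (h : ℂ) (f : PowerSeries ℂ) : fScaled h f = rescale h f := by
  ext
  simp [fScaled, coeff_rescale]

lemma one_sub_pSer_sq_mul_fScaled_mul (h κ : ℂ) (f : PowerSeries ℂ)
    (hf : f * shiftC κ f = geomEven) :
    (1 - pSer h * pSer h) * (fScaled h f * fScaled h (shiftC κ f)) = 1 := by
  have hP : 1 - pSer h * pSer h = rescale h (1 - X ^ 2) := by
    rw [map_sub, map_one, map_pow, rescale_X, pSer_eq]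
    ring
  rw [fScaled_eq_rescale, fScaled_eq_rescale, ← map_mul, hf, hP, ← map_mul,
    one_sub_X_sq_mul_geomEven, map_one]

lemma crossing_scalar_identity (h κ θ n : ℂ) (hκ : 2 * κ = n - 2 * θ) :
    qSer h κ - qSer h (-κ) + C θ * pSer h * qSer h (-κ) + C θ * pSer h * qSer h κ
      - C n * qSer h κ * qSer h (-κ) = 0 := by
  have hu : IsUnit ((1 - C (h * κ) * X) * (1 + C (h * κ) * X)) := by
    rw [isUnit_iff_constantCoeff]; simp
  have hq := qSer_mul_one_sub h κ
  have hq' := qSer_neg_mul_one_add h κ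
  have hn : C n = 2 * C κ + 2 * C θ := by
    rw [show n = 2 * κ + 2 * θ by linear_combination -hκ]; simp [map_ofNat]
  rw [← hu.mul_left_eq_zero, pSer_eq]
  simp only [map_mul] at hq hq' ⊢
  linear_combination
    ((1 + C h * C κ * X) + C θ * (C h * X) * (1 + C h * C κ * X) - C n * (C h * X)) * hq
    + (-(1 - C h * C κ * X) + C θ * (C h * X) * (1 - C h * C κ * X)
      - C n * qSer h κ * (1 - C h * C κ * X)) * hq'
    - (C h * X) ^ 2 * hn

section Lift

variable {N : ℕ} {ε : Fin N → ℂ} {θ : ℂ}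

lemma toPS_mul {ι : Type*} [Fintype ι] [DecidableEq ι] (M K : Matrix ι ι ℂ) :
    toPS (M * K) = toPS M * toPS K :=
  Matrix.map_mul

lemma toPS_one {ι : Type*} [DecidableEq ι] : toPS (1 : Matrix ι ι ℂ) = 1 :=
  Matrix.map_one _ (map_zero _) (map_one _)

lemma toPS_smul {ι : Type*} (a : ℂ) (M : Matrix ι ι ℂ) : toPS (a • M) = C a • toPS M := by
  ext i j
  simp [toPS]

lemma ptrans1PS_add (A B : Matrix (Fin N × Fin N) (Fin N × Fin N) (PowerSeries ℂ)) :
    ptrans1PS N ε (A + B) = ptrans1PS N ε A + ptrans1PS N ε B := by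
  ext
  simp only [ptrans1PS, Matrix.of_apply, Matrix.add_apply, mul_add]

lemma ptrans1PS_sub (A B : Matrix (Fin N × Fin N) (Fin N × Fin N) (PowerSeries ℂ)) :
    ptrans1PS N ε (A - B) = ptrans1PS N ε A - ptrans1PS N ε B := by
  ext
  simp only [ptrans1PS, Matrix.of_apply, Matrix.sub_apply, mul_sub]

lemma ptrans1PS_smul (x : PowerSeries ℂ)
    (A : Matrix (Fin N × Fin N) (Fin N × Fin N) (PowerSeries ℂ)) :
    ptrans1PS N ε (x • A) = x • ptrans1PS N ε A := by
  ext
  simp only [ptrans1PS, Matrix.of_apply, Matrix.smul_apply, smul_eq_mul, mul_left_comm]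

lemma ptrans1PS_one (hε : IsFormSign θ ε) : ptrans1PS N ε 1 = 1 := by
  ext ⟨a, b⟩ ⟨c, d⟩ : 1
  by_cases hac : a = c
  · subst hac
    have hC : C (ε a) * C (ε a) = 1 := by rw [← map_mul, hε.mul_self, map_one]
    simp [ptrans1PS, Matrix.one_apply, hC]
  · simp [ptrans1PS, Matrix.one_apply, hac, Ne.symm hac]

lemma ptrans1PS_toPS_Pm : ptrans1PS N ε (toPS (Pm N)) = toPS (Qm N ε) := by
  ext ⟨a, b⟩ ⟨c, d⟩ : 1
  simp only [ptrans1PS, Matrix.of_apply, toPS, Matrix.map_apply, Pm_apply, Qm_apply, ← map_mul]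
  congr 1
  aesop

lemma ptrans1PS_toPS_Qm (hε : IsFormSign θ ε) :
    ptrans1PS N ε (toPS (Qm N ε)) = toPS (Pm N) := by
  ext ⟨a, b⟩ ⟨c, d⟩ : 1
  simp only [ptrans1PS, Matrix.of_apply, toPS, Matrix.map_apply, Pm_apply, Qm_apply,
    Fin.rev_rev, ← map_mul]
  congr 1
  split_ifs with h1 h2 h2
  · exact hε.mul_mul_rev_mul_rev a c
  · exact absurd ⟨h1.2.symm, h1.1⟩ h2
  · exact absurd ⟨h2.2, h2.1.symm⟩ h1
  · simp

lemma shiftMat_RbarMat (κ h : ℂ) (f : PowerSeries ℂ) :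
    shiftMat (h * κ) (RbarMat N ε κ h f) = fScaled h (shiftC κ f) •
      (1 - qSer h (-κ) • toPS (Pm N) + pSer h • toPS (Qm N ε)) := by
  ext i j : 1
  simp only [shiftMat, RbarMat, Matrix.map_apply, Matrix.smul_apply, Matrix.add_apply,
    Matrix.sub_apply, Matrix.one_apply, toPS, smul_eq_mul, ← shiftAlgHom_apply, map_mul, map_add,
    map_sub, apply_ite, map_one, map_zero, shiftAlgHom_C, fScaled_eq_rescale, shiftAlgHom_rescale,
    shiftAlgHom_pSer, shiftAlgHom_qSer]

end Lift

theorem statement14_general (N : ℕ) (ε : Fin N → ℂ) (κ : ℂ)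
    (hcase : orthCase N ε κ ∨ spCase N ε κ) (h : ℂ)
    (f : PowerSeries ℂ) (hf : isNormSeries κ f) :
    RbarMat N ε κ h f * ptrans1PS N ε (shiftMat (h * κ) (RbarMat N ε κ h f)) = 1 ∧
    ptrans1PS N ε (shiftMat (h * κ) (RbarMat N ε κ h f)) * RbarMat N ε κ h f = 1 := by
  obtain ⟨θ, hε, hκ⟩ : ∃ θ, IsFormSign θ ε ∧ 2 * κ = N - 2 * θ := by
    rcases hcase with hc | hc
    · exact ⟨1, hc.isFormSign, by rw [hc.2]; ring⟩
    · exact ⟨-1, hc.isFormSign, by rw [hc.2.2]; ring⟩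
  have hR' : ptrans1PS N ε (shiftMat (h * κ) (RbarMat N ε κ h f)) =
      fScaled h (shiftC κ f) • (1 - qSer h (-κ) • toPS (Qm N ε) + pSer h • toPS (Pm N)) := by
    rw [shiftMat_RbarMat, ptrans1PS_smul, ptrans1PS_add, ptrans1PS_sub, ptrans1PS_smul,
      ptrans1PS_smul, ptrans1PS_one hε, ptrans1PS_toPS_Pm, ptrans1PS_toPS_Qm hε]
  obtain ⟨hRR', hR'R⟩ :=
    Matrix.crossing_pair_mul_eq_smul_one (P := toPS (Pm N)) (Q := toPS (Qm N ε))
    (by rw [← toPS_mul, Pm_mul_Pm, toPS_one]) (by rw [← toPS_mul, Qm_mul_Qm hε, toPS_smul])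
    (by rw [← toPS_mul, Pm_mul_Qm hε, toPS_smul]) (by rw [← toPS_mul, Qm_mul_Pm hε, toPS_smul])
    (crossing_scalar_identity h κ θ N hκ)
  have hnorm := one_sub_pSer_sq_mul_fScaled_mul h κ f hf.2.2
  rw [hR', RbarMat]
  constructor
  · rw [smul_mul_smul_comm, hRR', smul_smul, mul_comm, hnorm, one_smul]
  · rw [smul_mul_smul_comm, hR'R, smul_smul, mul_comm, mul_comm (fScaled h _), hnorm, one_smul]

/-- Crossing symmetry: `R̄(u) · R̄(u + hκ)' = 1` and `R̄(u + hκ)' · R̄(u) = 1`. -/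
theorem statement14 (N : ℕ) (hN : 2 ≤ N) (ε : Fin N → ℂ) (κ : ℂ)
    (hcase : orthCase N ε κ ∨ spCase N ε κ) (h : ℂ)
    (f : PowerSeries ℂ) (hf : isNormSeries κ f) :
    RbarMat N ε κ h f * ptrans1PS N ε (shiftMat (h * κ) (RbarMat N ε κ h f)) = 1 ∧
    ptrans1PS N ε (shiftMat (h * κ) (RbarMat N ε κ h f)) * RbarMat N ε κ h f = 1 :=
  statement14_general N ε κ hcase h f hf
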